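/- With omega_mu the unique positive solution of c^2 mu omega^2 = lambda_mu^+(omega) and Omega_mu = sqrt(kappa(1+mu)/(c^2 mu)), one has omega_mu - Omega_mu = O(mu^{3/2}) as mu → 0^+: there exist C, mu_0 > 0 such that |omega_mu - Omega_mu| ≤ C mu^{3/2} for all 0 < mu < mu_0. -/

import Mathlib

noncomputable def Pmu (κ μ t : ℝ) : ℝ :=
  (κ - 2*t + 2)^2 * μ^2 + 2*κ*(κ + 2*t - 2)*μ + κ^2

noncomputable def lamPlus (κ μ K : ℝ) : ℝ :=
  κ/2 + μ*(κ/2 + 1 - Real.cos K) + Real.sqrt (Pmu κ μ (Real.cos K)) / 2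

/-!
Writing `A = κ(1+μ) - 2μ(1 - cos ω)`, one has `P_μ(cos ω) = A² + 8κμ²(1 - cos ω)` and
`λ_μ^+(ω) = κ(1+μ) + (√P_μ - A)/2`. For `μ ≤ κ/8` we have `A ≥ κ/2`, so
`0 ≤ √P_μ - A ≤ 8κμ²(1 - cos ω)/(2A) ≤ 16μ²`. Hence `c²μω_μ²` lies in
`[c²μΩ_μ², c²μΩ_μ² + 8μ²]`, and `ω_μ - Ω_μ = (ω_μ² - Ω_μ²)/(ω_μ + Ω_μ) ≤ 8μ/(c²Ω_μ)`,
which is `O(μ^{3/2})` because `Ω_μ ≥ √κ/(|c|√μ)`.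
-/

open Real

lemma Pmu_eq (κ μ t : ℝ) :
    Pmu κ μ t = (κ*(1+μ) - 2*μ*(1-t))^2 + 8*κ*μ^2*(1-t) := by
  unfold Pmu; ring

lemma lamPlus_eq (κ μ K : ℝ) :
    lamPlus κ μ K =
      κ*(1+μ) + (√(Pmu κ μ (cos K)) - (κ*(1+μ) - 2*μ*(1 - cos K)))/2 := by
  unfold lamPlus; ring

lemma Real.le_sqrt_sq_add {a b : ℝ} (ha : 0 ≤ a) (hb : 0 ≤ b) : a ≤ √(a^2 + b) :=
  (le_sqrt ha (by positivity)).2 (by linarith)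

lemma Real.sqrt_sq_add_le {a b : ℝ} (ha : 0 < a) (hb : 0 ≤ b) :
    √(a^2 + b) ≤ a + b/(2*a) := by
  rw [sqrt_le_left (by positivity)]
  have : (a + b/(2*a))^2 = a^2 + b + (b/(2*a))^2 := by field_simp; ring
  nlinarith [sq_nonneg (b/(2*a))]

lemma lamPlus_mem_Icc {κ μ : ℝ} (K : ℝ) (hκ : 0 < κ) (hμ : 0 ≤ μ) (hμκ : μ ≤ κ/8) :
    lamPlus κ μ K ∈ Set.Icc (κ*(1+μ)) (κ*(1+μ) + 8*μ^2) := by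
  set t := cos K
  set A := κ*(1+μ) - 2*μ*(1-t)
  have ht : 0 ≤ 1 - t := by linarith [cos_le_one K]
  have ht' : 1 - t ≤ 2 := by linarith [neg_one_le_cos K]
  have hA : κ/2 ≤ A := by nlinarith
  have hb : 0 ≤ 8*κ*μ^2*(1-t) := by positivity
  have hbA : 8*κ*μ^2*(1-t)/(2*A) ≤ 16*μ^2 := by
    rw [div_le_iff₀ (by linarith)]
    have hμ2 : 0 ≤ μ^2 := sq_nonneg μ
    nlinarith [mul_le_mul_of_nonneg_left ht' (by positivity : 0 ≤ κ*μ^2),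
      mul_le_mul_of_nonneg_left hA hμ2]
  rw [lamPlus_eq, Pmu_eq]
  constructor
  · linarith [le_sqrt_sq_add (a := A) (by linarith) hb]
  · linarith [sqrt_sq_add_le (a := A) (by linarith) hb]

lemma lamPlus_pos {κ μ : ℝ} (K : ℝ) (hκ : 0 < κ) (hμ : 0 ≤ μ) : 0 < lamPlus κ μ K := by
  have : 0 ≤ μ*(κ/2 + 1 - cos K) := mul_nonneg hμ (by linarith [cos_le_one K])
  unfold lamPlus
  linarith [sqrt_nonneg (Pmu κ μ (cos K))]

lemma abs_sub_le_abs_sq_sub_sq_div {x y : ℝ} (hx : 0 < x) (hy : 0 ≤ y) :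
    |y - x| ≤ |y^2 - x^2| / x := by
  rw [le_div_iff₀ hx, show y^2 - x^2 = (y - x) * (y + x) by ring, abs_mul,
    abs_of_pos (by linarith : 0 < y + x)]
  exact mul_le_mul_of_nonneg_left (by linarith) (abs_nonneg _)

lemma abs_sub_sqrt_div_le {a x y δ : ℝ} (ha : 0 < a) (hx : 0 < x) (hy : 0 ≤ y)
    (h : a*y^2 ∈ Set.Icc x (x + δ)) : |y - √(x/a)| ≤ δ / √(a*x) := by
  have hΩ : 0 < √(x/a) := by positivity
  have hΩsq : a * √(x/a)^2 = x := by
    rw [sq_sqrt (by positivity)]; field_simp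
  have hsq : |y^2 - √(x/a)^2| ≤ δ/a := by
    rw [abs_of_nonneg (by nlinarith [h.1]), le_div_iff₀ ha]
    nlinarith [h.2]
  calc |y - √(x/a)| ≤ |y^2 - √(x/a)^2| / √(x/a) := abs_sub_le_abs_sq_sub_sq_div hΩ hy
    _ ≤ δ / a / √(x/a) := by gcongr
    _ = δ / √(a*x) := by
        rw [div_div, show a*x = a^2*(x/a) by field_simp, sqrt_mul (sq_nonneg a), sqrt_sq ha.le]

theorem stmt6_general (c κ : ℝ) (hκ : 0 < κ)
    (ω : ℝ → ℝ) (μ₀ : ℝ) (hμ₀ : 0 < μ₀)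
    (hω : ∀ μ : ℝ, 0 < μ → μ < μ₀ →
      0 < ω μ ∧ c^2*μ*(ω μ)^2 = lamPlus κ μ (ω μ)) :
    ∃ C > 0, ∃ μ₁ > 0, ∀ μ : ℝ, 0 < μ → μ < μ₁ →
      |ω μ - Real.sqrt (κ*(1+μ)/(c^2*μ))| ≤ C * μ ^ ((3:ℝ)/2) := by
  have hc : c ≠ 0 := by
    rintro rfl
    obtain ⟨-, h⟩ := hω (μ₀/2) (by positivity) (by linarith)
    have := lamPlus_pos (ω (μ₀/2)) hκ (by positivity : 0 ≤ μ₀/2)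
    simp [← h] at this
  refine ⟨8 / (|c| * √κ), by positivity, min μ₀ (κ/8), lt_min hμ₀ (by linarith),
    fun μ hμ hμ₁ => ?_⟩
  obtain ⟨hωpos, heq⟩ := hω μ hμ (hμ₁.trans_le (min_le_left _ _))
  have hlam := lamPlus_mem_Icc (ω μ) hκ hμ.le (hμ₁.trans_le (min_le_right _ _)).le
  rw [← heq] at hlam
  calc |ω μ - √(κ*(1+μ)/(c^2*μ))| ≤ 8*μ^2 / √(c^2*μ*(κ*(1+μ))) :=
        abs_sub_sqrt_div_le (by positivity) (by positivity) hωpos.le hlam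
    _ ≤ 8*μ^2 / √(c^2*μ*κ) := by gcongr; nlinarith
    _ = 8 / (|c| * √κ) * (μ * √μ) := by
        rw [sqrt_mul' _ hκ.le, sqrt_mul' _ hμ.le, sqrt_sq_eq_abs]
        field_simp
        rw [sq_sqrt hμ.le]
    _ = 8 / (|c| * √κ) * μ ^ ((3:ℝ)/2) := by
        rw [show (3:ℝ)/2 = 1 + 1/2 by norm_num, rpow_add hμ, rpow_one, ← sqrt_eq_rpow]

/-- If `ω μ` is, for each small `μ > 0`, the (unique) positive solution of
`c^2 μ ω^2 = λ_μ^+(ω)`, and `Ω_μ = sqrt (κ(1+μ)/(c^2 μ))`, then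
`ω μ - Ω_μ = O(μ^{3/2})` as `μ → 0⁺`. -/
theorem stmt6 (c κ : ℝ) (hc : 1 < c^2) (hκ : 0 < κ)
    (ω : ℝ → ℝ) (μ₀ : ℝ) (hμ₀ : 0 < μ₀)
    (hω : ∀ μ : ℝ, 0 < μ → μ < μ₀ →
      0 < ω μ ∧ c^2*μ*(ω μ)^2 = lamPlus κ μ (ω μ)) :
    ∃ C > 0, ∃ μ₁ > 0, ∀ μ : ℝ, 0 < μ → μ < μ₁ →
      |ω μ - Real.sqrt (κ*(1+μ)/(c^2*μ))| ≤ C * μ ^ ((3:ℝ)/2) :=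
  stmt6_general c κ hκ ω μ₀ hμ₀ hω
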